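/- Let AF = ⟨AR, attacks⟩ be a finite argumentation framework and define the positive disjunctive program Γ_AF = ⋃_{a∈AR} Γ(a), where Γ(a) = { d(a) ∨ d(b) | (b,a) ∈ attacks } ∪ { d(a) ← ⋀_{c:(c,b)∈attacks} d(c) | (b,a) ∈ attacks }. Then for S ⊆ AR: S is a preferred extension of AF if and only if compl(S) = { d(a) | a ∈ AR \ S } is a stable model of Γ_AF. -/
import Mathlib


inductive PForm (α : Type) where
  | atom : α → PForm α
  | tru : PForm α
  | fls : PForm α
  | neg : PForm α → PForm α
  | conj : PForm α → PForm α → PForm α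
  | disj : PForm α → PForm α → PForm α
  | impl : PForm α → PForm α → PForm α
deriving DecidableEq

def PForm.eval {α : Type} (M : Set α) : PForm α → Prop
  | .atom a => a ∈ M
  | .tru => True
  | .fls => False
  | .neg φ => ¬ PForm.eval M φ
  | .conj φ ψ => PForm.eval M φ ∧ PForm.eval M ψ
  | .disj φ ψ => PForm.eval M φ ∨ PForm.eval M ψ
  | .impl φ ψ => PForm.eval M φ → PForm.eval M ψ

def PForm.subst {α β : Type} (σ : α → PForm β) : PForm α → PForm β
  | .atom a => σ a
  | .tru => .tru
  | .fls => .fls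
  | .neg φ => .neg (PForm.subst σ φ)
  | .conj φ ψ => .conj (PForm.subst σ φ) (PForm.subst σ ψ)
  | .disj φ ψ => .disj (PForm.subst σ φ) (PForm.subst σ ψ)
  | .impl φ ψ => .impl (PForm.subst σ φ) (PForm.subst σ ψ)

def ModelOf {α : Type} (M : Set α) (T : Set (PForm α)) : Prop := ∀ φ ∈ T, PForm.eval M φ

def MinimalModel {α : Type} (M : Set α) (T : Set (PForm α)) : Prop :=
  ModelOf M T ∧ ∀ M', ModelOf M' T → M' ⊆ M → M' = M

def MaximalModel {α : Type} (M : Set α) (T : Set (PForm α)) : Prop :=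
  ModelOf M T ∧ ∀ M', ModelOf M' T → M ⊆ M' → M' = M

noncomputable def bigConj {ι α : Type} (s : Finset ι) (f : ι → PForm α) : PForm α :=
  (s.toList.map f).foldr PForm.conj PForm.tru

noncomputable def bigDisj {ι α : Type} (s : Finset ι) (f : ι → PForm α) : PForm α :=
  (s.toList.map f).foldr PForm.disj PForm.fls

def attackers {α : Type} [DecidableEq α] (att : Finset (α × α)) (a : α) : Finset α :=
  (att.filter (fun p => p.2 = a)).image Prod.fst

def conflictFree {α : Type} (att : Finset (α × α)) (S : Set α) : Prop :=
  ∀ a ∈ S, ∀ b ∈ S, (a, b) ∉ att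

def acceptable {α : Type} (att : Finset (α × α)) (S : Set α) (a : α) : Prop :=
  ∀ b, (b, a) ∈ att → ∃ c ∈ S, (c, b) ∈ att

def admissible {α : Type} (att : Finset (α × α)) (S : Set α) : Prop :=
  conflictFree att S ∧ ∀ a ∈ S, acceptable att S a

def preferredExt {α : Type} (att : Finset (α × α)) (S : Set α) : Prop :=
  admissible att S ∧ ∀ S', admissible att S' → S ⊆ S' → S' = S

noncomputable def alphaTheory {α : Type} [DecidableEq α] (att : Finset (α × α)) : Set (PForm α) :=
  { φ | ∃ p ∈ att, φ = PForm.impl (PForm.neg (PForm.atom p.1)) (PForm.atom p.2) } ∪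
  { φ | ∃ p ∈ att, φ = PForm.impl (bigConj (attackers att p.1) PForm.atom) (PForm.atom p.2) }

noncomputable def betaTheory {α : Type} [DecidableEq α] (att : Finset (α × α)) : Set (PForm α) :=
  { φ | ∃ p ∈ att, φ = PForm.impl (PForm.atom p.2) (PForm.neg (PForm.atom p.1)) } ∪
  { φ | ∃ p ∈ att, φ = PForm.impl (PForm.atom p.2) (bigDisj (attackers att p.1) PForm.atom) }

structure Clause (α : Type) where
  head : Finset α
  pos : Finset α
  negb : Finset α

def Clause.holds {α : Type} (M : Set α) (c : Clause α) : Prop :=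
  ((∀ b ∈ c.pos, b ∈ M) ∧ (∀ b ∈ c.negb, b ∉ M)) → ∃ a ∈ c.head, a ∈ M

def ClModel {α : Type} (M : Set α) (P : Set (Clause α)) : Prop := ∀ c ∈ P, Clause.holds M c

def ClMinModel {α : Type} (M : Set α) (P : Set (Clause α)) : Prop :=
  ClModel M P ∧ ∀ M', ClModel M' P → M' ⊆ M → M' = M

def reduct {α : Type} (P : Set (Clause α)) (S : Set α) : Set (Clause α) :=
  { c' | ∃ c ∈ P, (∀ b ∈ c.negb, b ∉ S) ∧ c' = ⟨c.head, c.pos, ∅⟩ }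

def StableModel {α : Type} (S : Set α) (P : Set (Clause α)) : Prop :=
  ClMinModel S (reduct P S)

def Gamma {α : Type} [DecidableEq α] (att : Finset (α × α)) : Set (Clause α) :=
  { c | ∃ p ∈ att, c = ⟨{p.2, p.1}, ∅, ∅⟩ } ∪
  { c | ∃ p ∈ att, c = ⟨{p.2}, attackers att p.1, ∅⟩ }

lemma mem_attackers {α : Type} [DecidableEq α] (att : Finset (α × α)) (a c : α) :
    c ∈ attackers att a ↔ (c, a) ∈ att := by
  simp only [attackers, Finset.mem_image, Finset.mem_filter]
  constructor
  · rintro ⟨⟨x, y⟩, ⟨h, rfl⟩, rfl⟩; exact h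
  · intro h; exact ⟨(c, a), ⟨h, rfl⟩, rfl⟩

lemma reduct_gamma {α : Type} [DecidableEq α] (att : Finset (α × α)) (X : Set α) :
    reduct (Gamma att) X = Gamma att := by
  ext c
  constructor
  · rintro ⟨c', hc', _, rfl⟩
    rcases hc' with ⟨p, hp, rfl⟩ | ⟨p, hp, rfl⟩
    · exact Or.inl ⟨p, hp, rfl⟩
    · exact Or.inr ⟨p, hp, rfl⟩
  · intro hc
    refine ⟨c, hc, ?_, ?_⟩
    · rcases hc with ⟨p, hp, rfl⟩ | ⟨p, hp, rfl⟩ <;> simp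
    · rcases hc with ⟨p, hp, rfl⟩ | ⟨p, hp, rfl⟩ <;> rfl

lemma model_iff {α : Type} [DecidableEq α] (att : Finset (α × α)) (M : Set α) :
    ClModel M (Gamma att) ↔ admissible att Mᶜ := by
  constructor
  · intro h
    constructor
    · intro a ha b hb hab
      have h1 := h ⟨{(a, b).2, (a, b).1}, ∅, ∅⟩ (Or.inl ⟨(a, b), hab, rfl⟩)
      rcases h1 ⟨by simp, by simp⟩ with ⟨x, hx, hxM⟩
      simp only [Finset.mem_insert, Finset.mem_singleton] at hx
      rcases hx with rfl | rfl
      · exact hb hxM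
      · exact ha hxM
    · intro a ha b hba
      have h2 := h ⟨{(b, a).2}, attackers att (b, a).1, ∅⟩ (Or.inr ⟨(b, a), hba, rfl⟩)
      by_contra hc
      push_neg at hc
      have hx : ∃ x ∈ ({(b, a).2} : Finset α), x ∈ M := by
        apply h2
        refine ⟨?_, by simp⟩
        intro c hcb
        by_contra hcM
        exact hc c hcM ((mem_attackers att b c).mp hcb)
      simp only [Finset.mem_singleton, exists_eq_left] at hx
      exact ha hx
  · rintro ⟨hcf, hacc⟩ c hc
    rcases hc with ⟨⟨b, a⟩, hp, rfl⟩ | ⟨⟨b, a⟩, hp, rfl⟩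
    · rintro ⟨-, -⟩
      by_contra hcon
      push_neg at hcon
      simp only [Finset.mem_insert, Finset.mem_singleton] at hcon
      have haM : a ∉ M := fun h => hcon a (Or.inl rfl) h
      have hbM : b ∉ M := fun h => hcon b (Or.inr rfl) h
      exact hcf b hbM a haM hp
    · rintro ⟨hall, -⟩
      refine ⟨a, by simp, ?_⟩
      by_contra haM
      obtain ⟨c, hcS, hcb⟩ := hacc a haM b hp
      exact hcS (hall c ((mem_attackers att b c).mpr hcb))

theorem stmt8 {α : Type} [DecidableEq α] [Fintype α] (att : Finset (α × α)) (S : Set α) :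
    preferredExt att S ↔ StableModel Sᶜ (Gamma att) := by
  unfold StableModel ClMinModel
  rw [reduct_gamma]
  constructor
  · rintro ⟨hadm, hmax⟩
    refine ⟨(model_iff att Sᶜ).mpr (by rwa [compl_compl]), ?_⟩
    intro M' hM' hsub
    have hadm' : admissible att M'ᶜ := (model_iff att M').mp hM'
    have hSsub : S ⊆ M'ᶜ := by
      intro x hx hxM'
      exact hsub hxM' hx
    have := hmax M'ᶜ hadm' hSsub
    rw [← compl_compl M', this]
  · rintro ⟨hmod, hmin⟩
    have hadm : admissible att S := by
      have := (model_iff att Sᶜ).mp hmod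
      rwa [compl_compl] at this
    refine ⟨hadm, ?_⟩
    intro S' hadm' hsub
    have hM' : ClModel S'ᶜ (Gamma att) := (model_iff att S'ᶜ).mpr (by rwa [compl_compl])
    have hsub' : S'ᶜ ⊆ Sᶜ := Set.compl_subset_compl.mpr hsub
    have := hmin S'ᶜ hM' hsub'
    rw [← compl_compl S', this, compl_compl]
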